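/- Let f̂ be any measurable regressor with E[(f̂(X)−Y)²] < ∞, let R̂(f̂,·) : 𝒳 → ℝ be any measurable calibrator with E[|R̂(f̂,X) − R(f̂,X)|] < ∞, and let r_{R̂}(x) = 1{R̂(f̂,x) ≤ c}. Let f* = f̄ and r*(x) = 1{R(f*,x) ≤ c}, and write L*_RwR = L_RwR(f*, r*). Then the excess RwR risk decomposes as L_RwR(f̂, r_{R̂}) − L*_RwR ≤ E[(f̂(X) − f*(X))²] + E[|R̂(f̂,X) − R(f̂,X)|], i.e., it is bounded by the prediction error plus the calibration error. -/

import Mathlib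

/-!
Write `D = f̂(X) − f*(X)` and `W = f*(X) − Y`. Since `D` is `σ(X)`-measurable and
`E[W | X] = 0`, the cross term `2DW` has zero conditional mean, so `R(f̂, X) = R(f*, X) + D²`.
Conditioning on `X` turns each loss into the integral of the pointwise risk `r·R + (1 − r)·c`.
Thresholding the true risk `R(f*, ·)` at `c` attains the pointwise minimum `min(R(f*, ·), c)`;
thresholding `R̂` in front of `R(f̂, ·) = R(f*, ·) + D²` costs at most `D²` more, plus
`|R̂ − R(f̂, ·)|` where `R̂` and `R(f̂, ·)` fall on different sides of `c`.
-/

open MeasureTheory Filter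

noncomputable section

/-- The regression-with-rejection (RwR) loss
`L_RwR(f,r) = E[ r(X)·(f(X)−Y)² + (1−r(X))·c ]`. -/
def LRwR {Ω : Type*} [MeasurableSpace Ω] {d : ℕ} (μ : Measure Ω)
    (X : Ω → EuclideanSpace ℝ (Fin d)) (Y : Ω → ℝ) (c : ℝ)
    (f r : EuclideanSpace ℝ (Fin d) → ℝ) : ℝ :=
  ∫ ω, r (X ω) * (f (X ω) - Y ω) ^ 2 + (1 - r (X ω)) * c ∂μ

/-- `g : 𝒳 → ℝ` is a measurable version of the conditional expectation
`E[Z | X]`, i.e. `g(X) = E[Z | σ(X)]` a.s. -/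
def IsCondMean {Ω : Type*} [MeasurableSpace Ω] {d : ℕ} (μ : Measure Ω)
    (X : Ω → EuclideanSpace ℝ (Fin d)) (Z : Ω → ℝ)
    (g : EuclideanSpace ℝ (Fin d) → ℝ) : Prop :=
  (fun ω => g (X ω)) =ᵐ[μ] μ[Z | MeasurableSpace.comap X inferInstance]

section

variable {Ω : Type*} {m m₀ : MeasurableSpace Ω} {μ : Measure Ω}

theorem condExp_sub_ae_eq_zero_of_ae_eq_condExp (hm : m ≤ m₀) [SigmaFinite (μ.trim hm)]
    {F Y : Ω → ℝ} (hF : StronglyMeasurable[m] F) (hFY : F =ᵐ[μ] μ[Y | m])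
    (hFY_int : Integrable (F - Y) μ) :
    μ[F - Y | m] =ᵐ[μ] 0 := by
  have hF_int : Integrable F μ := integrable_condExp.congr hFY.symm
  have hY_int : Integrable Y μ := (hF_int.sub hFY_int).congr (ae_of_all _ fun ω => by simp)
  filter_upwards [condExp_sub hF_int hY_int m, hFY] with ω hsub hω
  rw [hsub, Pi.sub_apply, condExp_of_stronglyMeasurable hm hF hF_int, ← hω, sub_self,
    Pi.zero_apply]

theorem condExp_add_sq_ae_eq (hm : m ≤ m₀) [IsFiniteMeasure μ] {D W : Ω → ℝ}
    (hD : StronglyMeasurable[m] D) (hD_L2 : MemLp D 2 μ) (hW_L2 : MemLp W 2 μ)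
    (hW : μ[W | m] =ᵐ[μ] 0) :
    μ[fun ω => (D ω + W ω) ^ 2 | m] =ᵐ[μ]
      μ[fun ω => W ω ^ 2 | m] + fun ω => D ω ^ 2 := by
  have hDW : Integrable (D * W) μ := hD_L2.integrable_mul hW_L2
  have hcross : μ[D * W | m] =ᵐ[μ] 0 := by
    filter_upwards [condExp_mul_of_stronglyMeasurable_left hD hDW (hW_L2.integrable one_le_two),
      hW] with ω h h0
    rw [h, Pi.mul_apply, h0, Pi.zero_apply, mul_zero]
  have hD2 : μ[fun ω => D ω ^ 2 | m] = fun ω => D ω ^ 2 :=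
    condExp_of_stronglyMeasurable hm (hD.pow 2) hD_L2.integrable_sq
  have hsplit : (fun ω => (D ω + W ω) ^ 2) =
      (fun ω => W ω ^ 2) + ((fun ω => D ω ^ 2) + (2 : ℝ) • (D * W)) := by
    ext ω
    simp only [Pi.add_apply, Pi.smul_apply, Pi.mul_apply, smul_eq_mul]
    ring
  rw [hsplit]
  filter_upwards [condExp_add hW_L2.integrable_sq (hD_L2.integrable_sq.add (hDW.smul (2 : ℝ))) m,
    condExp_add hD_L2.integrable_sq (hDW.smul (2 : ℝ)) m, condExp_smul (2 : ℝ) (D * W) m,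
    hcross] with ω h₁ h₂ h₃ h₄
  simp only [Pi.add_apply, Pi.smul_apply, Pi.zero_apply] at h₁ h₂ h₃ h₄ ⊢
  rw [h₁, h₂, h₃, h₄, hD2, smul_zero, add_zero]

theorem integral_mul_condExp (hm : m ≤ m₀) [SigmaFinite (μ.trim hm)] {g Z : Ω → ℝ}
    {C : ℝ} (hg : StronglyMeasurable[m] g) (hgC : ∀ ω, ‖g ω‖ ≤ C)
    (hZ : Integrable Z μ) :
    ∫ ω, g ω * μ[Z | m] ω ∂μ = ∫ ω, g ω * Z ω ∂μ := by
  rw [← integral_condExp hm (f := fun ω => g ω * Z ω)]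
  exact integral_congr_ae (condExp_mul_of_stronglyMeasurable_left hg
    (hZ.bdd_mul (hg.mono hm).aestronglyMeasurable (ae_of_all _ hgC)) hZ).symm

theorem integrable_one_sub_mul_const [IsFiniteMeasure μ] {g : Ω → ℝ} {C : ℝ}
    (hg : AEStronglyMeasurable g μ) (hgC : ∀ ω, ‖g ω‖ ≤ C) (c : ℝ) :
    Integrable (fun ω => (1 - g ω) * c) μ :=
  ((integrable_const 1).sub ⟨hg, .of_bounded (ae_of_all _ hgC)⟩).mul_const c

theorem integrable_mul_add_one_sub_mul [IsFiniteMeasure μ] {g Z : Ω → ℝ} {C : ℝ}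
    (hg : AEStronglyMeasurable g μ) (hgC : ∀ ω, ‖g ω‖ ≤ C) (hZ : Integrable Z μ)
    (c : ℝ) :
    Integrable (fun ω => g ω * Z ω + (1 - g ω) * c) μ :=
  (hZ.bdd_mul hg (ae_of_all _ hgC)).add (integrable_one_sub_mul_const hg hgC c)

theorem threshold_rejection_excess_le {B S e c : ℝ} (he : 0 ≤ e) :
    ((if B ≤ c then 1 else 0) * (S + e) + (1 - if B ≤ c then 1 else 0) * c)
      - ((if S ≤ c then 1 else 0) * S + (1 - if S ≤ c then 1 else 0) * c)
      ≤ e + |B - (S + e)| := by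
  have := le_abs_self (B - (S + e))
  have := neg_abs_le (B - (S + e))
  split_ifs <;> linarith

end

theorem LRwR_eq_integral_condRisk {Ω : Type*} [MeasurableSpace Ω] {d : ℕ} {μ : Measure Ω}
    [IsFiniteMeasure μ] {X : Ω → EuclideanSpace ℝ (Fin d)} {Y : Ω → ℝ}
    (hX : Measurable X) (c : ℝ) {f r R : EuclideanSpace ℝ (Fin d) → ℝ} {C : ℝ}
    (hr : Measurable r) (hrC : ∀ x, ‖r x‖ ≤ C)
    (hZ : Integrable (fun ω => (f (X ω) - Y ω) ^ 2) μ)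
    (hR : IsCondMean μ X (fun ω => (f (X ω) - Y ω) ^ 2) R) :
    LRwR μ X Y c f r = ∫ ω, r (X ω) * R (X ω) + (1 - r (X ω)) * c ∂μ := by
  have hrX : StronglyMeasurable[MeasurableSpace.comap X inferInstance] fun ω => r (X ω) :=
    (hr.comp (comap_measurable X)).stronglyMeasurable
  have hrX' : AEStronglyMeasurable (fun ω => r (X ω)) μ := (hr.comp hX).aestronglyMeasurable
  have hrest := integrable_one_sub_mul_const hrX' (fun ω => hrC (X ω)) c
  have hRX : Integrable (fun ω => R (X ω)) μ := integrable_condExp.congr hR.symm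
  rw [LRwR, integral_add (hZ.bdd_mul hrX' (ae_of_all _ fun ω => hrC (X ω))) hrest,
    integral_add (hRX.bdd_mul hrX' (ae_of_all _ fun ω => hrC (X ω))) hrest,
    ← integral_mul_condExp hX.comap_le hrX (fun ω => hrC (X ω)) hZ]
  congr 1
  exact integral_congr_ae (hR.mono fun ω h => congrArg (r (X ω) * ·) h.symm)

theorem ae_condRisk_eq_add_sq {Ω : Type*} [MeasurableSpace Ω] {d : ℕ} {μ : Measure Ω}
    [IsFiniteMeasure μ] {X : Ω → EuclideanSpace ℝ (Fin d)} {Y : Ω → ℝ}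
    (hX : Measurable X) {fstar fhat Rstar Rfhat : EuclideanSpace ℝ (Fin d) → ℝ}
    (hfstar_m : Measurable fstar) (hfhat : Measurable fhat) (hfstar : IsCondMean μ X Y fstar)
    (hW : MemLp (fun ω => fstar (X ω) - Y ω) 2 μ)
    (hD : MemLp (fun ω => fhat (X ω) - fstar (X ω)) 2 μ)
    (hRstar : IsCondMean μ X (fun ω => (fstar (X ω) - Y ω) ^ 2) Rstar)
    (hRfhat : IsCondMean μ X (fun ω => (fhat (X ω) - Y ω) ^ 2) Rfhat) :
    ∀ᵐ ω ∂μ, Rfhat (X ω) = Rstar (X ω) + (fhat (X ω) - fstar (X ω)) ^ 2 := by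
  have hXm := comap_measurable (m := inferInstance) X
  have hW_mean :
      μ[fun ω => fstar (X ω) - Y ω | MeasurableSpace.comap X inferInstance] =ᵐ[μ] 0 :=
    condExp_sub_ae_eq_zero_of_ae_eq_condExp hX.comap_le (hfstar_m.comp hXm).stronglyMeasurable
      hfstar (hW.integrable one_le_two)
  have hsum : (fun ω => (fhat (X ω) - Y ω) ^ 2) =
      fun ω => (fhat (X ω) - fstar (X ω) + (fstar (X ω) - Y ω)) ^ 2 := by
    simp_rw [sub_add_sub_cancel]
  rw [IsCondMean, hsum] at hRfhat
  filter_upwards [hRfhat, hRstar, condExp_add_sq_ae_eq hX.comap_le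
    ((hfhat.comp hXm).sub (hfstar_m.comp hXm)).stronglyMeasurable hD hW hW_mean]
    with ω hfhatω hstarω hdecomp
  rw [hfhatω, hstarω]
  exact hdecomp

theorem stmt13_general {Ω : Type*} [MeasurableSpace Ω] {d : ℕ}
    (μ : Measure Ω) [IsProbabilityMeasure μ]
    (X : Ω → EuclideanSpace ℝ (Fin d)) (Y : Ω → ℝ)
    (hX : Measurable X) (hY : Measurable Y)
    (c : ℝ)
    (fstar : EuclideanSpace ℝ (Fin d) → ℝ) (hfstar_m : Measurable fstar)
    (hfstar : IsCondMean μ X Y fstar)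
    (hfstar2 : Integrable (fun ω => (fstar (X ω) - Y ω) ^ 2) μ)
    (Rstar : EuclideanSpace ℝ (Fin d) → ℝ) (hRstar_m : Measurable Rstar)
    (hRstar : IsCondMean μ X (fun ω => (fstar (X ω) - Y ω) ^ 2) Rstar)
    (fhat : EuclideanSpace ℝ (Fin d) → ℝ) (hfhat : Measurable fhat)
    (hdiff2 : Integrable (fun ω => (fhat (X ω) - fstar (X ω)) ^ 2) μ)
    (Rfhat : EuclideanSpace ℝ (Fin d) → ℝ)
    (hRfhat : IsCondMean μ X (fun ω => (fhat (X ω) - Y ω) ^ 2) Rfhat)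
    (Rhat : EuclideanSpace ℝ (Fin d) → ℝ) (hRhat_m : Measurable Rhat)
    (hcal : Integrable (fun ω => |Rhat (X ω) - Rfhat (X ω)|) μ) :
    LRwR μ X Y c fhat (fun x => if Rhat x ≤ c then 1 else 0)
        - LRwR μ X Y c fstar (fun x => if Rstar x ≤ c then 1 else 0)
      ≤ (∫ ω, (fhat (X ω) - fstar (X ω)) ^ 2 ∂μ)
        + ∫ ω, |Rhat (X ω) - Rfhat (X ω)| ∂μ := by
  have hW : MemLp (fun ω => fstar (X ω) - Y ω) 2 μ :=
    (memLp_two_iff_integrable_sq ((hfstar_m.comp hX).sub hY).aestronglyMeasurable).2 hfstar2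
  have hD : MemLp (fun ω => fhat (X ω) - fstar (X ω)) 2 μ :=
    (memLp_two_iff_integrable_sq
      ((hfhat.comp hX).sub (hfstar_m.comp hX)).aestronglyMeasurable).2 hdiff2
  have hfhat2 : Integrable (fun ω => (fhat (X ω) - Y ω) ^ 2) μ := by
    simpa using (hD.add hW).integrable_sq
  have hrisk := ae_condRisk_eq_add_sq hX hfstar_m hfhat hfstar hW hD hRstar hRfhat
  have hthreshold {R : EuclideanSpace ℝ (Fin d) → ℝ} (hR : Measurable R) :
      Measurable (fun x => if R x ≤ c then (1 : ℝ) else 0) ∧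
        ∀ x, ‖if R x ≤ c then (1 : ℝ) else 0‖ ≤ 1 :=
    ⟨Measurable.ite (measurableSet_le hR measurable_const) measurable_const measurable_const,
      fun x => by split_ifs <;> simp⟩
  obtain ⟨hrhat, hrhat_le⟩ := hthreshold hRhat_m
  obtain ⟨hrstar, hrstar_le⟩ := hthreshold hRstar_m
  have hloss_hat := integrable_mul_add_one_sub_mul (hrhat.comp hX).aestronglyMeasurable
    (fun ω => hrhat_le (X ω)) (integrable_condExp.congr hRfhat.symm) c
  have hloss_star := integrable_mul_add_one_sub_mul (hrstar.comp hX).aestronglyMeasurable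
    (fun ω => hrstar_le (X ω)) (integrable_condExp.congr hRstar.symm) c
  rw [LRwR_eq_integral_condRisk hX c hrhat hrhat_le hfhat2 hRfhat,
    LRwR_eq_integral_condRisk hX c hrstar hrstar_le hfstar2 hRstar,
    ← integral_add hdiff2 hcal]
  refine (integral_sub hloss_hat hloss_star).symm.trans_le
    (integral_mono_ae (hloss_hat.sub hloss_star) (hdiff2.add hcal) ?_)
  filter_upwards [hrisk] with ω hω
  rw [hω]
  exact threshold_rejection_excess_le (sq_nonneg _)

/-- the excess RwR risk of `(f̂, r_{R̂})` over the optimal pair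
`(f*, r*)` is bounded by the prediction error plus the calibration error. -/
theorem stmt13 {Ω : Type*} [MeasurableSpace Ω] {d : ℕ}
    (μ : Measure Ω) [IsProbabilityMeasure μ]
    (X : Ω → EuclideanSpace ℝ (Fin d)) (Y : Ω → ℝ)
    (hX : Measurable X) (hY : Measurable Y)
    (hY2 : Integrable (fun ω => (Y ω) ^ 2) μ)
    (c : ℝ) (hc : 0 < c)
    (fstar : EuclideanSpace ℝ (Fin d) → ℝ) (hfstar_m : Measurable fstar)
    (hfstar : IsCondMean μ X Y fstar)
    (hfstar2 : Integrable (fun ω => (fstar (X ω) - Y ω) ^ 2) μ)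
    (Rstar : EuclideanSpace ℝ (Fin d) → ℝ) (hRstar_m : Measurable Rstar)
    (hRstar : IsCondMean μ X (fun ω => (fstar (X ω) - Y ω) ^ 2) Rstar)
    (fhat : EuclideanSpace ℝ (Fin d) → ℝ) (hfhat : Measurable fhat)
    (hfhat2 : Integrable (fun ω => (fhat (X ω) - Y ω) ^ 2) μ)
    (hdiff2 : Integrable (fun ω => (fhat (X ω) - fstar (X ω)) ^ 2) μ)
    (Rfhat : EuclideanSpace ℝ (Fin d) → ℝ) (hRfhat_m : Measurable Rfhat)
    (hRfhat : IsCondMean μ X (fun ω => (fhat (X ω) - Y ω) ^ 2) Rfhat)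
    (Rhat : EuclideanSpace ℝ (Fin d) → ℝ) (hRhat_m : Measurable Rhat)
    (hcal : Integrable (fun ω => |Rhat (X ω) - Rfhat (X ω)|) μ) :
    LRwR μ X Y c fhat (fun x => if Rhat x ≤ c then 1 else 0)
        - LRwR μ X Y c fstar (fun x => if Rstar x ≤ c then 1 else 0)
      ≤ (∫ ω, (fhat (X ω) - fstar (X ω)) ^ 2 ∂μ)
        + ∫ ω, |Rhat (X ω) - Rfhat (X ω)| ∂μ :=
  stmt13_general μ X Y hX hY c fstar hfstar_m hfstar hfstar2 Rstar hRstar_m hRstar fhat hfhat hdiff2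
    Rfhat hRfhat Rhat hRhat_m hcal
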